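/- arXiv:2410.22690 — 2 statements merged into one kernel-verified Lean document; each statement's English description precedes it below -/
import Mathlib

section
/- Lemma (existence of the relative value function / Abel limit of a centered function under a unichain stochastic matrix): Let S be a nonempty finite type and let M : S → S → ℝ be a row-stochastic matrix such that for every s' ∈ S the limit μ(s') = lim_{T→∞} (1/T) ∑_{t=0}^{T−1} (M^t)(s,s') exists and does not depend on s ∈ S. Let f : S → ℝ satisfy ∑_{s'} μ(s') f(s') = 0. Then for every s ∈ S, the limit lim_{γ→1⁻} ∑_{t=0}^∞ γ^t (M^t f)(s) exists in ℝ (where for each γ ∈ (0,1) the series converges absolutely). -/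
/-!
For `|γ| < 1` the Abel sum `g γ = ∑ γ^t M^t f` solves `(1 - γ M) g γ = f`, so by Cramer's rule
`γ ↦ g γ s` is a ratio of two polynomials in `γ`, in particular meromorphic at `1`. The Cesàro
means of `(M^t f) s` tend to `∑ μ f = 0`, and the classical Abelian argument turns this into
`(1 - γ) g γ s → 0` as `γ → 1⁻`. For a meromorphic function this rules out a pole at `1`, so
`g γ s` converges.
-/

open Filter Finset Topology

section Meromorphic

variable {𝕜 : Type*} [NontriviallyNormedField 𝕜] {E : Type*} [NormedAddCommGroup E]
  [NormedSpace 𝕜 E] {f : 𝕜 → E} {x : 𝕜}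

theorem MeromorphicAt.tendsto_nhdsNE_of_tendsto {l : Filter 𝕜} [l.NeBot]
    (hf : MeromorphicAt f x) (hl : l ≤ 𝓝[≠] x) {c : E} (h : Tendsto f l (𝓝 c)) :
    Tendsto f (𝓝[≠] x) (𝓝 c) := by
  -- along `𝓝[≠] x` a meromorphic function either converges or tends to infinity
  obtain ⟨c', hc'⟩ : ∃ c', Tendsto f (𝓝[≠] x) (𝓝 c') := by
    rw [tendsto_nhds_iff_meromorphicOrderAt_nonneg hf]
    by_contra! hneg
    refine not_tendsto_atTop_of_tendsto_nhds h.norm ?_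
    exact (tendsto_norm_atTop_iff_cobounded.2
      (tendsto_cobounded_of_meromorphicOrderAt_neg hneg)).mono_left hl
  rwa [tendsto_nhds_unique h (hc'.mono_left hl)]

theorem MeromorphicAt.exists_tendsto_of_tendsto_sub_smul (hf : MeromorphicAt f x)
    (h : Tendsto (fun z => (z - x) • f z) (𝓝[≠] x) (𝓝 0)) :
    ∃ c, Tendsto f (𝓝[≠] x) (𝓝 c) := by
  have hsub : MeromorphicAt (· - x) x := by fun_prop
  have hpos := (tendsto_zero_iff_meromorphicOrderAt_pos (hsub.smul hf)).1 h
  rw [meromorphicOrderAt_smul hsub hf, meromorphicOrderAt_id_sub_const] at hpos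
  rw [tendsto_nhds_iff_meromorphicOrderAt_nonneg hf]
  generalize meromorphicOrderAt f x = k at hpos ⊢
  induction k with
  | top => exact le_top
  | coe n => norm_cast at hpos ⊢; omega

end Meromorphic

theorem MeromorphicAt.exists_tendsto_nhdsLT_of_tendsto_sub_mul {f : ℝ → ℝ} {x : ℝ}
    (hf : MeromorphicAt f x) (h : Tendsto (fun y => (x - y) * f y) (𝓝[<] x) (𝓝 0)) :
    ∃ c, Tendsto f (𝓝[<] x) (𝓝 c) := by
  have hsub : MeromorphicAt (· - x) x := by fun_prop
  have hneg : Tendsto (fun y => (y - x) • f y) (𝓝[<] x) (𝓝 0) := by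
    simpa only [neg_zero, ← neg_mul, neg_sub, smul_eq_mul] using h.neg
  obtain ⟨c, hc⟩ := hf.exists_tendsto_of_tendsto_sub_smul
    ((hsub.smul hf).tendsto_nhdsNE_of_tendsto (nhdsLT_le_nhdsNE x) hneg)
  exact ⟨c, hc.mono_left (nhdsLT_le_nhdsNE x)⟩

theorem exists_abs_le_add_mul_of_tendsto_div_zero {u : ℕ → ℝ}
    (h : Tendsto (fun n : ℕ => u n / n) atTop (𝓝 0)) {ε : ℝ} (hε : 0 < ε) :
    ∃ B, ∀ n : ℕ, |u n| ≤ B + ε * n := by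
  obtain ⟨N, hN⟩ := Metric.tendsto_atTop.1 h ε hε
  have hB : 0 ≤ ∑ m ∈ range (N + 1), |u m| := sum_nonneg fun m _ => abs_nonneg _
  refine ⟨∑ m ∈ range (N + 1), |u m|, fun n => ?_⟩
  rcases lt_or_ge n (N + 1) with hn | hn
  · have := single_le_sum (fun m _ => abs_nonneg (u m)) (mem_range.2 hn)
    linarith [mul_nonneg hε.le (Nat.cast_nonneg (α := ℝ) n)]
  · have hpos : (0 : ℝ) < n := by exact_mod_cast (Nat.succ_pos N).trans_le hn
    have := hN n (by omega)
    rw [Real.dist_eq, sub_zero, abs_div, Nat.abs_cast, div_lt_iff₀ hpos] at this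
    linarith

theorem tsum_pow_mul_eq_one_sub_mul_tsum_pow_mul_sum_range {a : ℕ → ℝ} {γ : ℝ}
    (h : Summable fun t => γ ^ t * ∑ i ∈ range (t + 1), a i) :
    ∑' t, γ ^ t * a t = (1 - γ) * ∑' t, γ ^ t * ∑ i ∈ range (t + 1), a i := by
  have h' : Summable fun t => γ ^ t * ∑ i ∈ range t, a i := by
    refine (summable_nat_add_iff 1).1 ?_
    simpa only [pow_succ', mul_assoc] using h.mul_left γ
  have hshift : ∑' t, γ ^ t * ∑ i ∈ range t, a i
      = γ * ∑' t, γ ^ t * ∑ i ∈ range (t + 1), a i := by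
    rw [h'.tsum_eq_zero_add, ← tsum_mul_left]
    simp only [range_zero, sum_empty, mul_zero, zero_add, pow_succ', mul_assoc]
  calc ∑' t, γ ^ t * a t
      = ∑' t, (γ ^ t * ∑ i ∈ range (t + 1), a i - γ ^ t * ∑ i ∈ range t, a i) :=
        tsum_congr fun t => by rw [sum_range_succ]; ring
    _ = (1 - γ) * ∑' t, γ ^ t * ∑ i ∈ range (t + 1), a i := by
        rw [h.tsum_sub h', hshift]; ring

section LinearMajorant

variable {b : ℕ → ℝ} {B ε γ : ℝ}

theorem hasSum_pow_mul_add_mul (hγ₀ : 0 ≤ γ) (hγ₁ : γ < 1) (B ε : ℝ) :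
    HasSum (fun t : ℕ => γ ^ t * (B + ε * t)) (B * (1 - γ)⁻¹ + ε * (γ / (1 - γ) ^ 2)) := by
  have hγ : ‖γ‖ < 1 := by rwa [Real.norm_of_nonneg hγ₀]
  have := ((hasSum_geometric_of_lt_one hγ₀ hγ₁).mul_left B).add
    ((hasSum_coe_mul_geometric_of_norm_lt_one hγ).mul_left ε)
  exact this.congr_fun fun t => by ring

theorem norm_pow_mul_le_of_abs_le_add_mul (hγ₀ : 0 ≤ γ) (hb : ∀ t : ℕ, |b t| ≤ B + ε * t)
    (t : ℕ) : ‖γ ^ t * b t‖ ≤ γ ^ t * (B + ε * t) := by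
  rw [Real.norm_eq_abs, abs_mul, abs_pow, abs_of_nonneg hγ₀]
  exact mul_le_mul_of_nonneg_left (hb t) (pow_nonneg hγ₀ t)

theorem summable_pow_mul_of_abs_le_add_mul (hγ₀ : 0 ≤ γ) (hγ₁ : γ < 1)
    (hb : ∀ t : ℕ, |b t| ≤ B + ε * t) : Summable fun t => γ ^ t * b t :=
  (hasSum_pow_mul_add_mul hγ₀ hγ₁ B ε).summable.of_norm_bounded
    (norm_pow_mul_le_of_abs_le_add_mul hγ₀ hb)

theorem abs_tsum_pow_mul_le_of_abs_le_add_mul (hγ₀ : 0 ≤ γ) (hγ₁ : γ < 1)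
    (hb : ∀ t : ℕ, |b t| ≤ B + ε * t) :
    |∑' t, γ ^ t * b t| ≤ B * (1 - γ)⁻¹ + ε * (γ / (1 - γ) ^ 2) :=
  tsum_of_norm_bounded (hasSum_pow_mul_add_mul hγ₀ hγ₁ B ε)
    (norm_pow_mul_le_of_abs_le_add_mul hγ₀ hb)

end LinearMajorant

theorem tendsto_one_sub_mul_tsum_pow_mul_of_tendsto_cesaro_zero {a : ℕ → ℝ}
    (h : Tendsto (fun T : ℕ => (∑ t ∈ range T, a t) / T) atTop (𝓝 0)) :
    Tendsto (fun γ => (1 - γ) * ∑' t, γ ^ t * a t) (𝓝[<] 1) (𝓝 0) := by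
  -- Summation by parts: `(1 - γ) ∑ γ^t a t = (1 - γ)^2 ∑ γ^t A (t + 1)` with `A` the partial
  -- sums; `|A T| ≤ B + ε T / 2` then bounds this by `(1 - γ) (B + ε / 2) + ε γ / 2`.
  refine Metric.tendsto_nhds.2 fun ε hε => ?_
  obtain ⟨B, hB⟩ := exists_abs_le_add_mul_of_tendsto_div_zero h (half_pos hε)
  have hpartial (t : ℕ) : |∑ i ∈ range (t + 1), a i| ≤ (B + ε / 2) + ε / 2 * t := by
    have := hB (t + 1); push_cast at this; linarith
  have hsmall : ∀ᶠ γ in 𝓝[<] (1 : ℝ), (1 - γ) * (B + ε / 2) < ε / 2 := by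
    have : Tendsto (fun γ : ℝ => (1 - γ) * (B + ε / 2)) (𝓝 1) (𝓝 0) :=
      (by fun_prop : Continuous fun γ : ℝ => (1 - γ) * (B + ε / 2)).tendsto' 1 0 (by ring)
    exact (this.eventually (gt_mem_nhds (half_pos hε))).filter_mono nhdsWithin_le_nhds
  filter_upwards [hsmall, Ioo_mem_nhdsLT zero_lt_one] with γ hsmall ⟨hγ₀, hγ₁⟩
  have h1γ : 0 < 1 - γ := sub_pos.2 hγ₁
  rw [Real.dist_eq, sub_zero, tsum_pow_mul_eq_one_sub_mul_tsum_pow_mul_sum_range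
    (summable_pow_mul_of_abs_le_add_mul hγ₀.le hγ₁ hpartial), ← mul_assoc, abs_mul,
    abs_of_pos (mul_pos h1γ h1γ)]
  calc (1 - γ) * (1 - γ) * |∑' t, γ ^ t * ∑ i ∈ range (t + 1), a i|
      ≤ (1 - γ) * (1 - γ) * ((B + ε / 2) * (1 - γ)⁻¹ + ε / 2 * (γ / (1 - γ) ^ 2)) := by
        gcongr
        exact abs_tsum_pow_mul_le_of_abs_le_add_mul hγ₀.le hγ₁ hpartial
    _ = (1 - γ) * (B + ε / 2) + ε / 2 * γ := by field_simp
    _ < ε := by nlinarith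

theorem AnalyticAt.matrix_det {𝕜 : Type*} [NontriviallyNormedField 𝕜] {n : Type*} [Fintype n]
    [DecidableEq n] {B : 𝕜 → Matrix n n 𝕜} {x : 𝕜}
    (hB : ∀ i j, AnalyticAt 𝕜 (fun z => B z i j) x) :
    AnalyticAt 𝕜 (fun z => (B z).det) x := by
  simp only [Matrix.det_apply]
  refine Finset.analyticAt_fun_sum _ fun σ _ => ?_
  simp only [Units.smul_def, zsmul_eq_mul]
  exact analyticAt_const.mul (Finset.analyticAt_fun_prod _ fun i _ => hB _ _)

namespace Matrix

variable {n : Type*} [Fintype n]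

theorem tendsto_cesaro_mulVec_apply {P : ℕ → Matrix n n ℝ} {μ : n → ℝ} {s : n}
    (hμ : ∀ s', Tendsto (fun T : ℕ => (∑ t ∈ range T, P t s s') / T) atTop (𝓝 (μ s')))
    (f : n → ℝ) :
    Tendsto (fun T : ℕ => (∑ t ∈ range T, (P t).mulVec f s) / T) atTop
      (𝓝 (∑ s', μ s' * f s')) := by
  refine (tendsto_finsetSum univ fun s' _ => (hμ s').mul_const (f s')).congr fun T => ?_
  simp only [mulVec, dotProduct, div_mul_eq_mul_div, sum_mul, ← sum_div]
  rw [sum_comm]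

variable [DecidableEq n]

theorem meromorphicAt_det_updateCol_div_det {𝕜 : Type*} [NontriviallyNormedField 𝕜]
    (A : Matrix n n 𝕜) (f : n → 𝕜) (u : n) (x : 𝕜) :
    MeromorphicAt (fun γ => ((1 - γ • A).updateCol u f).det / (1 - γ • A).det) x := by
  refine (AnalyticAt.matrix_det fun i j => ?_).meromorphicAt.div
    (AnalyticAt.matrix_det fun i j => ?_).meromorphicAt
  · simp only [updateCol_apply, sub_apply, smul_apply, smul_eq_mul]
    split_ifs <;> fun_prop
  · simp only [sub_apply, smul_apply, smul_eq_mul]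
    fun_prop

theorem cramer_mulVec {R : Type*} [CommRing R] (A : Matrix n n R) (v : n → R) :
    cramer A (A *ᵥ v) = A.det • v := by
  rw [cramer_eq_adjugate_mulVec, mulVec_mulVec, adjugate_mul, smul_mulVec, one_mulVec]

variable {M : Matrix n n ℝ}

theorem norm_mulVec_le_of_mem_rowStochastic (hM : M ∈ rowStochastic ℝ n) (v : n → ℝ) :
    ‖M *ᵥ v‖ ≤ ‖v‖ := by
  refine pi_norm_le_iff_of_nonneg (norm_nonneg v) |>.2 fun i => ?_
  calc ‖(M *ᵥ v) i‖ ≤ ∑ j, ‖M i j * v j‖ := norm_sum_le _ _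
    _ ≤ ∑ j, M i j * ‖v‖ := by
        gcongr with j
        rw [norm_mul, Real.norm_of_nonneg (nonneg_of_mem_rowStochastic hM)]
        exact mul_le_mul_of_nonneg_left (norm_le_pi_norm v j) (nonneg_of_mem_rowStochastic hM)
    _ = ‖v‖ := by rw [← sum_mul, sum_row_of_mem_rowStochastic hM, one_mul]

theorem det_one_sub_smul_ne_zero_of_mem_rowStochastic (hM : M ∈ rowStochastic ℝ n) {γ : ℝ}
    (hγ : |γ| < 1) : (1 - γ • M).det ≠ 0 := by
  intro hdet
  obtain ⟨v, hv, hker⟩ := exists_mulVec_eq_zero_iff.2 hdet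
  have hfix : v = γ • (M *ᵥ v) := by
    rwa [sub_mulVec, one_mulVec, smul_mulVec, sub_eq_zero] at hker
  have hpos : 0 < ‖v‖ := norm_pos_iff.2 hv
  have : ‖v‖ ≤ |γ| * ‖v‖ := by
    calc ‖v‖ = |γ| * ‖M *ᵥ v‖ := by rw [← Real.norm_eq_abs, ← norm_smul, ← hfix]
      _ ≤ |γ| * ‖v‖ := by gcongr; exact norm_mulVec_le_of_mem_rowStochastic hM v
  nlinarith

theorem abs_pow_mul_mulVec_pow_le (hM : M ∈ rowStochastic ℝ n) (γ : ℝ) (f : n → ℝ) (u : n)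
    (t : ℕ) : |γ ^ t * (M ^ t *ᵥ f) u| ≤ |γ| ^ t * ‖f‖ := by
  rw [abs_mul, abs_pow]
  gcongr
  exact (norm_le_pi_norm _ u).trans (norm_mulVec_le_of_mem_rowStochastic (pow_mem hM t) f)

theorem summable_abs_pow_mul_mulVec_pow (hM : M ∈ rowStochastic ℝ n) {γ : ℝ} (hγ : |γ| < 1)
    (f : n → ℝ) (u : n) : Summable fun t => |γ ^ t * (M ^ t *ᵥ f) u| :=
  ((summable_geometric_of_lt_one (abs_nonneg γ) hγ).mul_right ‖f‖).of_nonneg_of_le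
    (fun _ => abs_nonneg _) (abs_pow_mul_mulVec_pow_le hM γ f u)

theorem one_sub_smul_mulVec_tsum_pow_mul_mulVec_pow (hM : M ∈ rowStochastic ℝ n) {γ : ℝ}
    (hγ : |γ| < 1) (f : n → ℝ) :
    (1 - γ • M) *ᵥ (fun u => ∑' t, γ ^ t * (M ^ t *ᵥ f) u) = f := by
  set g : n → ℝ := fun u => ∑' t, γ ^ t * (M ^ t *ᵥ f) u
  have hsum (u : n) : Summable fun t => γ ^ t * (M ^ t *ᵥ f) u :=
    (summable_abs_pow_mul_mulVec_pow hM hγ f u).of_abs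
  ext u
  have hstep : (M *ᵥ g) u = ∑' t, γ ^ t * (M ^ (t + 1) *ᵥ f) u := by
    calc (M *ᵥ g) u = ∑ j, ∑' t, M u j * (γ ^ t * (M ^ t *ᵥ f) j) :=
          sum_congr rfl fun j _ => tsum_mul_left.symm
      _ = ∑' t, ∑ j, M u j * (γ ^ t * (M ^ t *ᵥ f) j) :=
          (Summable.tsum_finsetSum fun j _ => (hsum j).mul_left (M u j)).symm
      _ = ∑' t, γ ^ t * (M ^ (t + 1) *ᵥ f) u := tsum_congr fun t => by
          rw [pow_succ', ← mulVec_mulVec]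
          change _ = γ ^ t * ∑ j, M u j * (M ^ t *ᵥ f) j
          rw [mul_sum]
          exact sum_congr rfl fun j _ => by ring
  have hshift : ∑' t, γ ^ (t + 1) * (M ^ (t + 1) *ᵥ f) u
      = γ * ∑' t, γ ^ t * (M ^ (t + 1) *ᵥ f) u := by
    rw [← tsum_mul_left]
    exact tsum_congr fun t => by ring
  rw [sub_mulVec, one_mulVec, smul_mulVec, Pi.sub_apply, Pi.smul_apply, smul_eq_mul, hstep]
  change (∑' t, γ ^ t * (M ^ t *ᵥ f) u) - _ = _
  rw [(hsum u).tsum_eq_zero_add, hshift, pow_zero, pow_zero, one_mulVec, one_mul,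
    add_sub_cancel_right]

theorem tsum_pow_mul_mulVec_pow_eq_det_div (hM : M ∈ rowStochastic ℝ n) {γ : ℝ}
    (hγ : |γ| < 1) (f : n → ℝ) (u : n) :
    ∑' t, γ ^ t * (M ^ t *ᵥ f) u = ((1 - γ • M).updateCol u f).det / (1 - γ • M).det := by
  have h := congrFun (cramer_mulVec (1 - γ • M) fun u => ∑' t, γ ^ t * (M ^ t *ᵥ f) u) u
  rw [one_sub_smul_mulVec_tsum_pow_mul_mulVec_pow hM hγ f, cramer_apply] at h
  rw [eq_div_iff (det_one_sub_smul_ne_zero_of_mem_rowStochastic hM hγ), h, Pi.smul_apply,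
    smul_eq_mul, mul_comm]

end Matrix

theorem relative_value_exists_general
    {S : Type} [Fintype S] [DecidableEq S]
    (M : Matrix S S ℝ)
    (hnn : ∀ s s', 0 ≤ M s s') (hrow : ∀ s, ∑ s', M s s' = 1)
    (μ : S → ℝ)
    (hμ : ∀ s s', Tendsto (fun T : ℕ => (∑ t ∈ range T, (M ^ t) s s') / (T : ℝ))
      atTop (𝓝 (μ s')))
    (f : S → ℝ) (hf : ∑ s', μ s' * f s' = 0) (s : S) :
    (∀ γ ∈ Set.Ioo (0 : ℝ) 1, Summable fun t : ℕ => |γ ^ t * ((M ^ t).mulVec f) s|) ∧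
      ∃ c : ℝ, Tendsto (fun γ : ℝ => ∑' t : ℕ, γ ^ t * ((M ^ t).mulVec f) s)
        (𝓝[<] (1 : ℝ)) (𝓝 c) := by
  have hM : M ∈ Matrix.rowStochastic ℝ S := Matrix.mem_rowStochastic_iff_sum.2 ⟨hnn, hrow⟩
  have habs {γ : ℝ} (hγ : γ ∈ Set.Ioo (0 : ℝ) 1) : |γ| < 1 := abs_lt.2 ⟨by linarith [hγ.1], hγ.2⟩
  refine ⟨fun γ hγ => Matrix.summable_abs_pow_mul_mulVec_pow hM (habs hγ) f s, ?_⟩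
  have hrational : ∀ᶠ γ in 𝓝[<] (1 : ℝ), ∑' t : ℕ, γ ^ t * ((M ^ t).mulVec f) s
      = ((1 - γ • M).updateCol s f).det / (1 - γ • M).det := by
    filter_upwards [Ioo_mem_nhdsLT zero_lt_one] with γ hγ
    exact Matrix.tsum_pow_mul_mulVec_pow_eq_det_div hM (habs hγ) f s
  have habel := tendsto_one_sub_mul_tsum_pow_mul_of_tendsto_cesaro_zero
    (hf ▸ Matrix.tendsto_cesaro_mulVec_apply (hμ s) f)
  have hmero := Matrix.meromorphicAt_det_updateCol_div_det M f s 1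
  obtain ⟨c, hc⟩ := hmero.exists_tendsto_nhdsLT_of_tendsto_sub_mul
    (habel.congr' (hrational.mono fun γ hγ => by rw [hγ]))
  exact ⟨c, hc.congr' (hrational.mono fun γ hγ => hγ.symm)⟩

/-- **Existence of the relative value function (Abel limit of a centered function under a
unichain stochastic matrix).** If `M` is row-stochastic, the Cesàro limits
`μ(s') = lim_T (1/T) ∑_{t<T} (M^t)(s,s')` exist and do not depend on `s`, and
`∑_{s'} μ(s') f(s') = 0`, then for each `γ ∈ (0,1)` the series `∑_t γ^t (M^t f)(s)`
converges absolutely, and for every `s` the limit as `γ → 1⁻` of its sum exists. -/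
theorem relative_value_exists
    {S : Type} [Fintype S] [DecidableEq S] [Nonempty S]
    (M : Matrix S S ℝ)
    (hnn : ∀ s s', 0 ≤ M s s') (hrow : ∀ s, ∑ s', M s s' = 1)
    (μ : S → ℝ)
    (hμ : ∀ s s', Tendsto (fun T : ℕ => (∑ t ∈ range T, (M ^ t) s s') / (T : ℝ))
      atTop (𝓝 (μ s')))
    (f : S → ℝ) (hf : ∑ s', μ s' * f s' = 0) (s : S) :
    (∀ γ ∈ Set.Ioo (0 : ℝ) 1, Summable fun t : ℕ => |γ ^ t * ((M ^ t).mulVec f) s|) ∧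
      ∃ c : ℝ, Tendsto (fun γ : ℝ => ∑' t : ℕ, γ ^ t * ((M ^ t).mulVec f) s)
        (𝓝[<] (1 : ℝ)) (𝓝 c) :=
  relative_value_exists_general M hnn hrow μ hμ f hf s
end

section
/- Alignment Theorem, concrete Markov form: Let (π,P) be unichain and let r* : S × A → ℝ. For a partial trajectory h = ([(s_0,a_0),…,(s_{T−1},a_{T−1})], z), let v(π,P,r*,γ)(h) = ∑_{t=0}^{T−1} γ^t r*(s_t,a_t) + γ^T V(π,P,r*,γ)(z) be the expected discounted return of the Markov lottery induced by (π,P) starting with h. Then for all partial trajectories h, h': the limit lim_{γ→1⁻} ( v(π,P,r*,γ)(h) − v(π,P,r*,γ)(h') ) exists, and this limit is ≥ 0 if and only if B(r̃,Ṽ)(h) ≥ B(r̃,Ṽ)(h'), where r̃ = r̃(π,P,r*) is the relative reward and Ṽ = Ṽ(π,P,r*) is the relative value function. -/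
/-!
Discounting by `γ` splits the value of `π` into the relative value (the discounted value of
the centred reward `rπ - r̄`) plus `r̄ / (1 - γ)`. Along a partial trajectory of length `T` the
constant part contributes `r̄ (1 + γ + ⋯ + γ^(T-1)) + γ^T r̄ / (1 - γ) = r̄ / (1 - γ)`,
independently of the trajectory, so it cancels in `v(h) - v(h')`. What remains is the
discounted return of the relative reward bootstrapped with the relative value, which tends
to `B(r̃, Ṽ)(h) - B(r̃, Ṽ)(h')` as `γ → 1⁻`.
-/

open Filter Finset Topology

noncomputable section

variable {S A : Type} [Fintype S] [DecidableEq S] [Fintype A] [Nonempty S] [Nonempty A]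

/-- A policy assigns to each state a probability distribution over actions. -/
def IsPolicy (π : S → A → ℝ) : Prop :=
  (∀ s a, 0 ≤ π s a) ∧ ∀ s, ∑ a, π s a = 1

/-- A transition matrix assigns to each action and state a probability distribution
over next states. -/
def IsTransition (P : A → S → S → ℝ) : Prop :=
  (∀ a s s', 0 ≤ P a s s') ∧ ∀ a s, ∑ s', P a s s' = 1

/-- The state-transition matrix induced by a policy and a transition matrix. -/
def Mmat (π : S → A → ℝ) (P : A → S → S → ℝ) : Matrix S S ℝ :=
  Matrix.of fun s s' => ∑ a, π s a * P a s s'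

/-- Expected one-step reward under policy `π`. -/
def rpi (π : S → A → ℝ) (r : S × A → ℝ) (s : S) : ℝ := ∑ a, π s a * r (s, a)

/-- `(π, P)` is unichain with limiting distribution `μ`: for every `s'`, the Cesàro
averages of `(M(π,P)^t)(s,s')` converge to `μ s'`, independently of `s`. -/
def Unichain (π : S → A → ℝ) (P : A → S → S → ℝ) (μ : S → ℝ) : Prop :=
  ∀ s s', Tendsto (fun T : ℕ => (∑ t ∈ range T, (Mmat π P ^ t) s s') / (T : ℝ))
    atTop (𝓝 (μ s'))

/-- Discounted value function. -/
def Vval (π : S → A → ℝ) (P : A → S → S → ℝ) (r : S × A → ℝ) (γ : ℝ) (s : S) : ℝ :=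
  ∑' t : ℕ, γ ^ t * ((Mmat π P ^ t).mulVec (rpi π r)) s

/-- The bootstrapped return of a partial trajectory `h = (pairs, z)`. -/
def Breturn (r : S × A → ℝ) (V : S → ℝ) (h : List (S × A) × S) : ℝ :=
  (h.1.map r).sum + V h.2

open Matrix

namespace Matrix

variable {n : Type*} [Fintype n] [DecidableEq n] {M : Matrix n n ℝ}

theorem abs_mulVec_le_norm_of_mem_rowStochastic (hM : M ∈ rowStochastic ℝ n) (f : n → ℝ)
    (i : n) : |(M *ᵥ f) i| ≤ ‖f‖ :=
  calc |(M *ᵥ f) i| ≤ ∑ j, M i j * |f j| := by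
        refine (abs_sum_le_sum_abs _ _).trans_eq (sum_congr rfl fun j _ => ?_)
        rw [abs_mul, abs_of_nonneg (nonneg_of_mem_rowStochastic hM)]
    _ ≤ ∑ j, M i j * ‖f‖ :=
        sum_le_sum fun j _ => mul_le_mul_of_nonneg_left (norm_le_pi_norm f j)
          (nonneg_of_mem_rowStochastic hM)
    _ = ‖f‖ := by rw [← sum_mul, sum_row_of_mem_rowStochastic hM, one_mul]

theorem summable_geometric_mul_pow_mulVec (hM : M ∈ rowStochastic ℝ n) (f : n → ℝ) {γ : ℝ}
    (hγ0 : 0 ≤ γ) (hγ1 : γ < 1) (i : n) :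
    Summable fun k : ℕ => γ ^ k * (M ^ k *ᵥ f) i := by
  refine Summable.of_norm_bounded ((summable_geometric_of_lt_one hγ0 hγ1).mul_right ‖f‖)
    fun k => ?_
  rw [norm_mul, norm_pow, Real.norm_of_nonneg hγ0, Real.norm_eq_abs]
  exact mul_le_mul_of_nonneg_left
    (abs_mulVec_le_norm_of_mem_rowStochastic (pow_mem hM k) f i) (pow_nonneg hγ0 k)

theorem pow_mulVec_sub_const (hM : M ∈ rowStochastic ℝ n) (f : n → ℝ) (c : ℝ) (k : ℕ)
    (i : n) : (M ^ k *ᵥ fun j => f j - c) i = (M ^ k *ᵥ f) i - c := by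
  have hc : (fun j => f j - c) = f - c • 1 := by ext; simp
  simp [hc, mulVec_sub, mulVec_smul, one_vecMul_of_mem_rowStochastic (pow_mem hM k)]

theorem tsum_geometric_mul_pow_mulVec_eq_sub_const_add (hM : M ∈ rowStochastic ℝ n) (f : n → ℝ) (c : ℝ)
    {γ : ℝ} (hγ0 : 0 ≤ γ) (hγ1 : γ < 1) (i : n) :
    ∑' k : ℕ, γ ^ k * (M ^ k *ᵥ f) i
      = ∑' k : ℕ, γ ^ k * (M ^ k *ᵥ fun j => f j - c) i + c / (1 - γ) := by
  have hterm : ∀ k : ℕ, γ ^ k * (M ^ k *ᵥ f) i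
      = γ ^ k * (M ^ k *ᵥ fun j => f j - c) i + c * γ ^ k := fun k => by
    rw [pow_mulVec_sub_const hM]; ring
  simp_rw [hterm]
  rw [(summable_geometric_mul_pow_mulVec hM _ hγ0 hγ1 i).tsum_add
      ((summable_geometric_of_lt_one hγ0 hγ1).mul_left c),
    tsum_mul_left, tsum_geometric_of_lt_one hγ0 hγ1, div_eq_mul_inv]

end Matrix

omit [Nonempty S] [Nonempty A] in
theorem mmat_mem_rowStochastic {π : S → A → ℝ} {P : A → S → S → ℝ} (hπ : IsPolicy π)
    (hP : IsTransition P) : Mmat π P ∈ rowStochastic ℝ S := by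
  refine mem_rowStochastic_iff_sum.2
    ⟨fun s s' => sum_nonneg fun a _ => mul_nonneg (hπ.1 s a) (hP.1 a s s'), fun s => ?_⟩
  simp only [Mmat, of_apply]
  rw [sum_comm]
  simp_rw [← mul_sum, hP.2, mul_one]
  exact hπ.2 s

def discountedReturn {α β : Type*} (r : α → ℝ) (V : β → ℝ) (γ : ℝ) (h : List α × β) : ℝ :=
  (∑ t : Fin h.1.length, γ ^ (t : ℕ) * r (h.1.get t)) + γ ^ h.1.length * V h.2

theorem discountedReturn_add_const {α β : Type*} (r : α → ℝ) (V : β → ℝ) (c : ℝ) {γ : ℝ}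
    (hγ : γ ≠ 1) (h : List α × β) :
    discountedReturn r (fun z => V z + c / (1 - γ)) γ h
      = discountedReturn (fun x => r x - c) V γ h + c / (1 - γ) := by
  have hgeom : ∑ t : Fin h.1.length, γ ^ (t : ℕ) * c = c * ((γ ^ h.1.length - 1) / (γ - 1)) := by
    rw [Fin.sum_univ_eq_sum_range (fun t => γ ^ t * c), ← sum_mul, geom_sum_eq hγ, mul_comm]
  have h1 : γ - 1 ≠ 0 := sub_ne_zero.2 hγ
  have h2 : 1 - γ ≠ 0 := sub_ne_zero.2 hγ.symm
  simp only [discountedReturn, mul_sub, sum_sub_distrib, hgeom]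
  field_simp
  ring

theorem tendsto_discountedReturn_breturn {α β : Type} {l : Filter ℝ} (hl : l ≤ 𝓝 1)
    (r : α × β → ℝ) {V : ℝ → α → ℝ} {W : α → ℝ} (h : List (α × β) × α)
    (hV : Tendsto (fun γ => V γ h.2) l (𝓝 (W h.2))) :
    Tendsto (fun γ => discountedReturn r (V γ) γ h) l (𝓝 (Breturn r W h)) := by
  have hcont : ∀ m : ℕ, Tendsto (fun γ : ℝ => γ ^ m) l (𝓝 1) := fun m => by
    simpa using ((continuous_pow m).tendsto 1).mono_left hl
  have hsum := tendsto_finsetSum (univ : Finset (Fin h.1.length))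
    fun t _ => (hcont t).mul_const (r (h.1.get t))
  simpa [discountedReturn, Breturn] using hsum.add ((hcont h.1.length).mul hV)

theorem alignment_concrete_markov_form_general
    (π : S → A → ℝ) (P : A → S → S → ℝ)
    (hπ : IsPolicy π) (hP : IsTransition P)
    (μ : S → ℝ)
    (rstar : S × A → ℝ)
    (Vrel : S → ℝ)
    (hVrel : ∀ s : S, Tendsto
      (fun γ : ℝ => ∑' k : ℕ, γ ^ k *
        ((Mmat π P ^ k).mulVec (fun s' => rpi π rstar s' - ∑ s'', μ s'' * rpi π rstar s'')) s)
      (𝓝[<] (1 : ℝ)) (𝓝 (Vrel s)))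
    (h h' : List (S × A) × S) :
    ∃ c : ℝ,
      Tendsto
        (fun γ : ℝ =>
          ((∑ t : Fin h.1.length, γ ^ (t : ℕ) * rstar (h.1.get t))
              + γ ^ h.1.length * Vval π P rstar γ h.2)
            - ((∑ t : Fin h'.1.length, γ ^ (t : ℕ) * rstar (h'.1.get t))
              + γ ^ h'.1.length * Vval π P rstar γ h'.2))
        (𝓝[<] (1 : ℝ)) (𝓝 c) ∧
      (0 ≤ c ↔
        Breturn (fun p => rstar p - ∑ s'', μ s'' * rpi π rstar s'') Vrel h'
          ≤ Breturn (fun p => rstar p - ∑ s'', μ s'' * rpi π rstar s'') Vrel h) := by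
  set rbar := ∑ s'', μ s'' * rpi π rstar s''
  set Vdisc : ℝ → S → ℝ := fun γ s =>
    ∑' k : ℕ, γ ^ k * ((Mmat π P ^ k).mulVec (fun s' => rpi π rstar s' - rbar)) s
  have hsplit : ∀ᶠ γ in 𝓝[<] (1 : ℝ),
      Vval π P rstar γ = fun z => Vdisc γ z + rbar / (1 - γ) := by
    filter_upwards [Ioo_mem_nhdsLT zero_lt_one] with γ hγ
    funext z
    exact tsum_geometric_mul_pow_mulVec_eq_sub_const_add (mmat_mem_rowStochastic hπ hP) _ rbar hγ.1.le hγ.2 z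
  have hlim := fun hh : List (S × A) × S => tendsto_discountedReturn_breturn (V := Vdisc)
    nhdsWithin_le_nhds (fun p => rstar p - rbar) hh (hVrel hh.2)
  refine ⟨_, ((hlim h).sub (hlim h')).congr' ?_, sub_nonneg⟩
  filter_upwards [hsplit, self_mem_nhdsWithin] with γ hV (hγ : γ < 1)
  change _ = discountedReturn rstar (Vval π P rstar γ) γ h
    - discountedReturn rstar (Vval π P rstar γ) γ h'
  rw [hV, discountedReturn_add_const _ _ _ hγ.ne, discountedReturn_add_const _ _ _ hγ.ne]
  ring

/-- **Alignment Theorem, concrete Markov form.** For all partial trajectories `h, h'`,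
the limit `lim_{γ→1⁻} ( v(π,P,r*,γ)(h) − v(π,P,r*,γ)(h') )` exists, and this limit is
`≥ 0` if and only if `B(r̃,Ṽ)(h) ≥ B(r̃,Ṽ)(h')`, where `r̃` is the relative reward and `Ṽ`
the relative value function of `(π,P,r*)`. -/
theorem alignment_concrete_markov_form
    (π : S → A → ℝ) (P : A → S → S → ℝ)
    (hπ : IsPolicy π) (hP : IsTransition P)
    (μ : S → ℝ) (huni : Unichain π P μ)
    (rstar : S × A → ℝ)
    (Vrel : S → ℝ)
    (hVrel : ∀ s : S, Tendsto
      (fun γ : ℝ => ∑' k : ℕ, γ ^ k *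
        ((Mmat π P ^ k).mulVec (fun s' => rpi π rstar s' - ∑ s'', μ s'' * rpi π rstar s'')) s)
      (𝓝[<] (1 : ℝ)) (𝓝 (Vrel s)))
    (h h' : List (S × A) × S) :
    ∃ c : ℝ,
      Tendsto
        (fun γ : ℝ =>
          ((∑ t : Fin h.1.length, γ ^ (t : ℕ) * rstar (h.1.get t))
              + γ ^ h.1.length * Vval π P rstar γ h.2)
            - ((∑ t : Fin h'.1.length, γ ^ (t : ℕ) * rstar (h'.1.get t))
              + γ ^ h'.1.length * Vval π P rstar γ h'.2))
        (𝓝[<] (1 : ℝ)) (𝓝 c) ∧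
      (0 ≤ c ↔
        Breturn (fun p => rstar p - ∑ s'', μ s'' * rpi π rstar s'') Vrel h'
          ≤ Breturn (fun p => rstar p - ∑ s'', μ s'' * rpi π rstar s'') Vrel h) :=
  alignment_concrete_markov_form_general π P hπ hP μ rstar Vrel hVrel h h'
end
end
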